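/- arXiv:2208.05395 — 2 statements merged into one kernel-verified Lean document; each statement's English description precedes it below -/
import Mathlib

section
/- Let $\eta \in (0,1)$, $\epsilon_1 \in (0,1)$, and $k = \lceil \frac{1}{\eta^2} \ln(2/\epsilon_1) \rceil$. Define the polynomial $p_k(z) = z \sum_{i=0}^{k} (1 - z^2)^i \prod_{j=1}^{i} \frac{2j-1}{2j}$ of degree $2k+1$. Then for all $x \in [-1, -\eta] \cup [\eta, 1]$, $|\mathrm{sgn}(x) - p_k(x)| \le \epsilon_1/2$. -/
open Finset Real

/-- The polynomial `p_k(z) = z ∑_{i=0}^k (1-z²)^i ∏_{j=1}^i (2j-1)/(2j)`. -/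
noncomputable def pSign (k : ℕ) (z : ℝ) : ℝ :=
  z * ∑ i ∈ range (k + 1), (1 - z ^ 2) ^ i * ∏ j ∈ Icc 1 i, ((2 * (j : ℝ) - 1) / (2 * j))

/-!
With `y = 1 - x²`, `pSign k x` is `x` times the degree-`k` Taylor polynomial of
`(1 - y)^(-1/2) = ∑ cᵢ yⁱ` with `cᵢ = signCoeff i`, so it approximates `x / |x|`.
Finitely: `pSign k' = (2k+1) c_k (1 - x²)^k ≥ 0` on `[-1, 1]`, and adding the tail majorant
`c_{k+1} (1 - x²)^(k+1) / x` gives a function with derivative `-c_{k+1} (1 - x²)^(k+1) / x² ≤ 0`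
on `(0, 1]`. Both functions take the value `1` at `x = 1`, hence
`0 ≤ 1 - pSign k x ≤ c_{k+1} (1 - x²)^(k+1) / x` there. For `x ≥ η`, `c_{k+1} ≤ 1/√(2k+3) ≤ η`
and `(1 - η²)^(k+1) ≤ exp(-(k+1) η²) ≤ ε₁/2` by the choice of `k`; the case `x < 0` follows by oddness.
-/

noncomputable def signCoeff (i : ℕ) : ℝ := ∏ j ∈ Icc 1 i, ((2 * (j : ℝ) - 1) / (2 * j))

lemma signCoeff_zero : signCoeff 0 = 1 := by simp [signCoeff]

lemma signCoeff_succ (i : ℕ) : signCoeff (i + 1) = signCoeff i * ((2 * i + 1) / (2 * i + 2)) := by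
  rw [signCoeff, prod_Icc_succ_top (by omega), ← signCoeff]
  push_cast
  ring_nf

lemma signCoeff_pos (i : ℕ) : 0 < signCoeff i := by
  induction i with
  | zero => simp [signCoeff_zero]
  | succ i ih => rw [signCoeff_succ]; positivity

lemma signCoeff_sq_mul_le_one (i : ℕ) : signCoeff i ^ 2 * (2 * i + 1) ≤ 1 := by
  induction i with
  | zero => simp [signCoeff_zero]
  | succ i ih =>
    have key : signCoeff (i + 1) ^ 2 * (2 * (i + 1) + 1)
        = signCoeff i ^ 2 * (2 * i + 1) * ((2 * i + 1) * (2 * i + 3) / (2 * i + 2) ^ 2) := by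
      rw [signCoeff_succ]
      field_simp
      ring
    have hfrac : (2 * (i : ℝ) + 1) * (2 * i + 3) / (2 * i + 2) ^ 2 ≤ 1 := by
      rw [div_le_one (by positivity)]
      nlinarith
    push_cast
    rw [key]
    exact mul_le_one₀ ih (by positivity) hfrac

lemma signCoeff_le_of_one_le {i : ℕ} {η : ℝ} (hη : 0 ≤ η) (h : 1 ≤ (2 * i + 1) * η ^ 2) :
    signCoeff i ≤ η := by
  have hsq : signCoeff i ^ 2 * (2 * i + 1) ≤ η ^ 2 * (2 * i + 1) := by
    linarith [signCoeff_sq_mul_le_one i]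
  exact le_of_pow_le_pow_left₀ two_ne_zero hη (le_of_mul_le_mul_right hsq (by positivity))

lemma pSign_eq (k : ℕ) (z : ℝ) :
    pSign k z = z * ∑ i ∈ range (k + 1), (1 - z ^ 2) ^ i * signCoeff i := rfl

lemma pSign_succ (k : ℕ) (z : ℝ) :
    pSign (k + 1) z = pSign k z + z * ((1 - z ^ 2) ^ (k + 1) * signCoeff (k + 1)) := by
  rw [pSign_eq, pSign_eq, sum_range_succ]
  ring

lemma pSign_one (k : ℕ) : pSign k 1 = 1 := by
  simp [pSign_eq, zero_pow_eq, signCoeff_zero]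

lemma pSign_neg (k : ℕ) (x : ℝ) : pSign k (-x) = -pSign k x := by
  rw [pSign_eq, pSign_eq, neg_sq, neg_mul]

lemma hasDerivAt_one_sub_sq_pow (n : ℕ) (x : ℝ) :
    HasDerivAt (fun z : ℝ => (1 - z ^ 2) ^ (n + 1)) ((n + 1) * (1 - x ^ 2) ^ n * -(2 * x)) x := by
  have h : HasDerivAt (fun z : ℝ => 1 - z ^ 2) (-(2 * x)) x := by
    simpa using (hasDerivAt_pow 2 x).const_sub 1
  simpa using h.fun_pow (n + 1)

lemma hasDerivAt_pSign (k : ℕ) (x : ℝ) :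
    HasDerivAt (pSign k) ((2 * k + 1) * signCoeff k * (1 - x ^ 2) ^ k) x := by
  induction k with
  | zero =>
    have hid : pSign 0 = id := funext fun z => by simp [pSign_eq, signCoeff_zero]
    simpa [hid, signCoeff_zero] using hasDerivAt_id x
  | succ k ih =>
    rw [funext (pSign_succ k)]
    refine (ih.add ((hasDerivAt_id' x).mul
      ((hasDerivAt_one_sub_sq_pow k x).mul_const _))).congr_deriv ?_
    rw [signCoeff_succ]
    field_simp
    push_cast
    ring

lemma pSign_le_one (k : ℕ) {x : ℝ} (hx : x ∈ Set.Icc (-1) 1) : pSign k x ≤ 1 := by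
  have hmono : MonotoneOn (pSign k) (Set.Icc (-1) 1) := by
    refine monotoneOn_of_hasDerivWithinAt_nonneg (convex_Icc _ _)
      (fun t _ => (hasDerivAt_pSign k t).continuousAt.continuousWithinAt)
      (fun t _ => (hasDerivAt_pSign k t).hasDerivWithinAt) fun t ht => ?_
    rw [interior_Icc] at ht
    have : 0 ≤ 1 - t ^ 2 := by nlinarith [ht.1, ht.2]
    have := signCoeff_pos k
    positivity
  simpa [pSign_one] using hmono hx (Set.right_mem_Icc.mpr (by norm_num)) hx.2

lemma one_sub_pSign_le (k : ℕ) {x : ℝ} (hx : x ∈ Set.Ioc 0 1) :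
    1 - pSign k x ≤ signCoeff (k + 1) * (1 - x ^ 2) ^ (k + 1) / x := by
  set g : ℝ → ℝ := fun t => pSign k t + signCoeff (k + 1) * (1 - t ^ 2) ^ (k + 1) / t
  have hg : ∀ t ≠ 0, HasDerivAt g (-(signCoeff (k + 1) * (1 - t ^ 2) ^ (k + 1) / t ^ 2)) t := by
    intro t ht
    refine ((hasDerivAt_pSign k t).add
      (((hasDerivAt_one_sub_sq_pow k t).const_mul _).div (hasDerivAt_id' t) ht)).congr_deriv ?_
    rw [signCoeff_succ]
    field_simp
    ring
  have hanti : AntitoneOn g (Set.Ioc 0 1) := by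
    refine antitoneOn_of_hasDerivWithinAt_nonpos (convex_Ioc _ _)
      (fun t ht => (hg t ht.1.ne').continuousAt.continuousWithinAt)
      (fun t ht => (hg t (interior_subset ht).1.ne').hasDerivWithinAt) fun t ht => ?_
    rw [interior_Ioc] at ht
    have := signCoeff_pos (k + 1)
    have : 0 ≤ 1 - t ^ 2 := by nlinarith [ht.1, ht.2]
    exact neg_nonpos.mpr (by positivity)
  have hg1 : g 1 = 1 := by simp [g, pSign_one]
  have := hanti hx (Set.right_mem_Ioc.mpr one_pos) hx.2
  rw [hg1] at this
  linarith

lemma one_sub_pSign_le_exp {k : ℕ} {η x : ℝ} (hη : 0 < η) (hk : 1 ≤ (2 * k + 3) * η ^ 2)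
    (hx : x ∈ Set.Icc η 1) : 1 - pSign k x ≤ exp (-((k + 1) * η ^ 2)) := by
  obtain ⟨hηx, hx1⟩ := hx
  have hcoeff : signCoeff (k + 1) ≤ η := signCoeff_le_of_one_le hη.le (by push_cast; linarith)
  have hx2 : 0 ≤ 1 - x ^ 2 := by nlinarith
  have hη2 : 0 ≤ 1 - η ^ 2 := by nlinarith
  calc 1 - pSign k x ≤ signCoeff (k + 1) * (1 - x ^ 2) ^ (k + 1) / x :=
        one_sub_pSign_le k ⟨hη.trans_le hηx, hx1⟩
    _ ≤ η * (1 - η ^ 2) ^ (k + 1) / η := by gcongr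
    _ = (1 - η ^ 2) ^ (k + 1) := by field_simp
    _ ≤ exp (-η ^ 2) ^ (k + 1) := by gcongr; exact one_sub_le_exp_neg _
    _ = exp (-((k + 1) * η ^ 2)) := by rw [← exp_nat_mul]; push_cast; ring_nf

/-- With `k = ⌈(1/η²) ln(2/ε₁)⌉`, for all `x ∈ [-1,-η] ∪ [η,1]`,
`|sgn(x) - p_k(x)| ≤ ε₁/2`. -/
theorem sign_poly_approx (η ε₁ : ℝ) (hη : η ∈ Set.Ioo (0 : ℝ) 1)
    (hε : ε₁ ∈ Set.Ioo (0 : ℝ) 1)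
    (k : ℕ) (hk : k = ⌈(1 / η ^ 2) * Real.log (2 / ε₁)⌉₊)
    (x : ℝ) (hx : x ∈ Set.Icc (-1 : ℝ) (-η) ∪ Set.Icc η 1) :
    |Real.sign x - pSign k x| ≤ ε₁ / 2 := by
  obtain ⟨hη0, -⟩ := hη
  obtain ⟨hε0, hε1⟩ := hε
  have hlog : log (2 / ε₁) ≤ k * η ^ 2 := by
    rw [← div_le_iff₀ (by positivity), div_eq_inv_mul, ← one_div, hk]
    exact Nat.le_ceil _
  have hlog2 : log 2 ≤ log (2 / ε₁) := log_le_log two_pos (by rw [le_div_iff₀ hε0]; linarith)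
  have hk3 : 1 ≤ (2 * k + 3) * η ^ 2 := by nlinarith [log_two_gt_d9]
  have hexp : exp (-((k + 1) * η ^ 2)) ≤ ε₁ / 2 := by
    calc exp (-((k + 1) * η ^ 2)) ≤ exp (-log (2 / ε₁)) := exp_le_exp.mpr (by nlinarith)
      _ = ε₁ / 2 := by rw [exp_neg, exp_log (by positivity), inv_div]
  have hright : ∀ y ∈ Set.Icc η 1, |1 - pSign k y| ≤ ε₁ / 2 := fun y hy =>
    abs_le.mpr ⟨by linarith [pSign_le_one k ⟨by linarith [hy.1], hy.2⟩],
      (one_sub_pSign_le_exp hη0 hk3 hy).trans hexp⟩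
  rcases hx with ⟨hx1, hxη⟩ | hx
  · have := hright (-x) ⟨by linarith, by linarith⟩
    rwa [Real.sign_of_neg (by linarith), ← neg_neg x, pSign_neg, neg_sub_neg, abs_sub_comm]
  · rw [Real.sign_of_pos (by linarith [hx.1])]
    exact hright x hx
end

section
/- Let $m$ be a positive integer, $X_1, \dots, X_m$ independent uniform $\pm 1$ random variables, $S_m = \sum_{i=1}^m X_i$, and let $T_k$ denote the Chebyshev polynomial of the first kind (with $T_{-k} = T_k$). Then for every $t \ge 0$ and every $z \in [-1,1]$: $\left| \mathbb{E}\left[ T_{S_m}(z) \cdot \mathbf{1}[|S_m| \le t] \right] - z^m \right| \le 2 e^{-t^2/(2m)}$. -/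
open Finset Polynomial Real

/-- The signed sum `S(ε) = ∑ᵢ εᵢ` of `m` signs encoded as booleans. -/
def signSum (m : ℕ) (ε : Fin m → Bool) : ℤ :=
  ∑ i, (if ε i then (1 : ℤ) else -1)

lemma signSum_cons (m : ℕ) (b : Bool) (ε : Fin m → Bool) :
    signSum (m + 1) (Fin.cons b ε) = (if b then (1:ℤ) else -1) + signSum m ε := by
  simp [signSum, Fin.sum_univ_succ]

lemma sum_split (m : ℕ) (f : (Fin (m+1) → Bool) → ℝ) :
    ∑ ε : Fin (m+1) → Bool, f ε = ∑ b : Bool, ∑ ε : Fin m → Bool, f (Fin.cons b ε) := by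
  rw [← (Fin.consEquiv (fun _ : Fin (m+1) => Bool)).sum_comp f, Fintype.sum_prod_type]
  rfl

lemma sum_cheb (m : ℕ) (z : ℝ) :
    ∑ ε : Fin m → Bool, (Polynomial.Chebyshev.T ℝ (signSum m ε)).eval z = 2 ^ m * z ^ m := by
  induction m with
  | zero => simp [signSum]
  | succ m ih =>
      rw [sum_split]
      have h1 : ∀ ε : Fin m → Bool,
          (Polynomial.Chebyshev.T ℝ (signSum (m+1) (Fin.cons true ε))).eval z
          = (Polynomial.Chebyshev.T ℝ (signSum m ε + 1)).eval z := by
        intro ε; rw [signSum_cons]; norm_num [add_comm]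
      have h2 : ∀ ε : Fin m → Bool,
          (Polynomial.Chebyshev.T ℝ (signSum (m+1) (Fin.cons false ε))).eval z
          = (Polynomial.Chebyshev.T ℝ (signSum m ε - 1)).eval z := by
        intro ε; rw [signSum_cons]; norm_num [add_comm, sub_eq_add_neg]
      rw [Fintype.sum_bool, Finset.sum_congr rfl fun ε _ => h1 ε,
        Finset.sum_congr rfl fun ε _ => h2 ε, ← Finset.sum_add_distrib]
      have key : ∀ ε : Fin m → Bool,
          (Polynomial.Chebyshev.T ℝ (signSum m ε + 1)).eval z
            + (Polynomial.Chebyshev.T ℝ (signSum m ε - 1)).eval z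
          = 2 * z * (Polynomial.Chebyshev.T ℝ (signSum m ε)).eval z := by
        intro ε
        have h := congrArg (Polynomial.eval z) (Polynomial.Chebyshev.T_add_one ℝ (signSum m ε))
        simp only [Polynomial.eval_sub, Polynomial.eval_mul, Polynomial.eval_ofNat,
          Polynomial.eval_X] at h
        rw [h]; ring
      rw [Finset.sum_congr rfl fun ε _ => key ε, ← Finset.mul_sum, ih]
      ring

lemma cheb_bound (k : ℤ) (z : ℝ) (hz : z ∈ Set.Icc (-1 : ℝ) 1) :
    |(Polynomial.Chebyshev.T ℝ k).eval z| ≤ 1 := by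
  obtain ⟨h1, h2⟩ := hz
  have hc : Real.cos (Real.arccos z) = z := Real.cos_arccos h1 h2
  rw [← hc, Polynomial.Chebyshev.T_real_cos]
  exact Real.abs_cos_le_one _

lemma mgf (m : ℕ) (l : ℝ) :
    ∑ ε : Fin m → Bool, Real.exp (l * (signSum m ε : ℝ))
      = (Real.exp l + Real.exp (-l)) ^ m := by
  induction m with
  | zero => simp [signSum]
  | succ m ih =>
      rw [sum_split]
      have h1 : ∀ ε : Fin m → Bool,
          Real.exp (l * (signSum (m+1) (Fin.cons true ε) : ℝ))
          = Real.exp l * Real.exp (l * (signSum m ε : ℝ)) := by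
        intro ε; rw [signSum_cons, ← Real.exp_add]; push_cast; norm_num; ring_nf
      have h2 : ∀ ε : Fin m → Bool,
          Real.exp (l * (signSum (m+1) (Fin.cons false ε) : ℝ))
          = Real.exp (-l) * Real.exp (l * (signSum m ε : ℝ)) := by
        intro ε; rw [signSum_cons, ← Real.exp_add]; push_cast; norm_num; ring_nf
      rw [Fintype.sum_bool, Finset.sum_congr rfl fun ε _ => h1 ε,
        Finset.sum_congr rfl fun ε _ => h2 ε, ← Finset.mul_sum, ← Finset.mul_sum, ih, pow_succ]
      ring

open Classical in
lemma tail_bound (m : ℕ) (hm : 0 < m) (t : ℝ) (ht : 0 ≤ t) :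
    ∑ ε : Fin m → Bool, (if (|signSum m ε| : ℝ) ≤ t then (0:ℝ) else 1)
      ≤ 2 ^ m * (2 * Real.exp (-t ^ 2 / (2 * m))) := by
  set l : ℝ := t / m with hl
  have hl0 : 0 ≤ l := div_nonneg ht (by positivity)
  have step : ∀ ε : Fin m → Bool,
      (if (|signSum m ε| : ℝ) ≤ t then (0:ℝ) else 1)
        ≤ Real.exp (l * (signSum m ε : ℝ) - l * t)
          + Real.exp (l * (-(signSum m ε : ℝ)) - l * t) := by
    intro ε
    set S : ℝ := (signSum m ε : ℝ)
    by_cases h : |S| ≤ t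
    · simp only [h, if_true]; positivity
    · simp only [h, if_false]
      push_neg at h
      rcases lt_abs.mp h with hS | hS
      · have : (1:ℝ) ≤ Real.exp (l * S - l * t) := by
          rw [show l * S - l * t = l * (S - t) by ring]
          calc (1:ℝ) = Real.exp 0 := (Real.exp_zero).symm
          _ ≤ _ := Real.exp_le_exp.mpr (by nlinarith)
        nlinarith [Real.exp_pos (l * (-S) - l * t)]
      · have : (1:ℝ) ≤ Real.exp (l * (-S) - l * t) := by
          rw [show l * (-S) - l * t = l * (-S - t) by ring]
          calc (1:ℝ) = Real.exp 0 := (Real.exp_zero).symm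
          _ ≤ _ := Real.exp_le_exp.mpr (by nlinarith)
        nlinarith [Real.exp_pos (l * S - l * t)]
  calc ∑ ε : Fin m → Bool, (if (|signSum m ε| : ℝ) ≤ t then (0:ℝ) else 1)
      ≤ ∑ ε : Fin m → Bool, (Real.exp (l * (signSum m ε : ℝ) - l * t)
          + Real.exp (l * (-(signSum m ε : ℝ)) - l * t)) :=
        Finset.sum_le_sum fun ε _ => step ε
    _ = Real.exp (-(l*t)) * ((Real.exp l + Real.exp (-l)) ^ m
          + (Real.exp (-l) + Real.exp l) ^ m) := by
        rw [Finset.sum_add_distrib]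
        have e1 : ∀ ε : Fin m → Bool, Real.exp (l * (signSum m ε : ℝ) - l * t)
            = Real.exp (-(l*t)) * Real.exp (l * (signSum m ε : ℝ)) := by
          intro ε; rw [← Real.exp_add]; ring_nf
        have e2 : ∀ ε : Fin m → Bool, Real.exp (l * (-(signSum m ε : ℝ)) - l * t)
            = Real.exp (-(l*t)) * Real.exp ((-l) * (signSum m ε : ℝ)) := by
          intro ε; rw [← Real.exp_add]; ring_nf
        rw [Finset.sum_congr rfl fun ε _ => e1 ε, Finset.sum_congr rfl fun ε _ => e2 ε,
          ← Finset.mul_sum, ← Finset.mul_sum, mgf, mgf]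
        ring_nf
    _ = 2 * Real.exp (-(l*t)) * (2 * Real.cosh l) ^ m := by
        rw [Real.cosh_eq]
        have : 2 * ((Real.exp l + Real.exp (-l)) / 2) = Real.exp l + Real.exp (-l) := by ring
        rw [this, add_comm (Real.exp (-l))]
        ring
    _ ≤ 2 * Real.exp (-(l*t)) * (2 * Real.exp (l ^ 2 / 2)) ^ m := by
        apply mul_le_mul_of_nonneg_left _ (by positivity)
        apply pow_le_pow_left₀ (by positivity)
        have := Real.cosh_le_exp_half_sq l
        linarith
    _ = 2 ^ m * (2 * (Real.exp (-(l*t)) * Real.exp (l^2/2) ^ m)) := by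
        rw [mul_pow]; ring
    _ ≤ 2 ^ m * (2 * Real.exp (-t ^ 2 / (2 * m))) := by
        apply mul_le_mul_of_nonneg_left _ (by positivity)
        apply mul_le_mul_of_nonneg_left _ (by norm_num)
        rw [← Real.exp_nat_mul, ← Real.exp_add]
        apply le_of_eq
        congr 1
        have hm' : (m:ℝ) ≠ 0 := Nat.cast_ne_zero.mpr hm.ne'
        rw [hl]
        field_simp
        ring

open Classical in
/-- Sachdeva–Vishnoi: for `S_m` a sum of `m` independent uniform `±1` variables, `t ≥ 0`,
and `z ∈ [-1,1]`, `|E[T_{S_m}(z) 1[|S_m| ≤ t]] - z^m| ≤ 2 e^{-t²/(2m)}`. -/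
theorem chebyshev_truncated_expectation (m : ℕ) (hm : 0 < m) (t : ℝ) (ht : 0 ≤ t)
    (z : ℝ) (hz : z ∈ Set.Icc (-1 : ℝ) 1) :
    |(1 / 2 ^ m : ℝ) * ∑ ε : Fin m → Bool,
          (if (|signSum m ε| : ℝ) ≤ t then
            (Polynomial.Chebyshev.T ℝ (signSum m ε)).eval z else 0) - z ^ m| ≤
      2 * Real.exp (-t ^ 2 / (2 * m)) := by
  have h2m : (0:ℝ) < 2 ^ m := by positivity
  have key : (1 / 2 ^ m : ℝ) * ∑ ε : Fin m → Bool,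
          (if (|signSum m ε| : ℝ) ≤ t then
            (Polynomial.Chebyshev.T ℝ (signSum m ε)).eval z else 0) - z ^ m
      = -((1 / 2 ^ m : ℝ) * ∑ ε : Fin m → Bool,
          (if (|signSum m ε| : ℝ) ≤ t then (0:ℝ) else
            (Polynomial.Chebyshev.T ℝ (signSum m ε)).eval z)) := by
    have hsplit : ∀ ε : Fin m → Bool,
        (if (|signSum m ε| : ℝ) ≤ t then
            (Polynomial.Chebyshev.T ℝ (signSum m ε)).eval z else 0)
        = (Polynomial.Chebyshev.T ℝ (signSum m ε)).eval z
          - (if (|signSum m ε| : ℝ) ≤ t then (0:ℝ) else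
            (Polynomial.Chebyshev.T ℝ (signSum m ε)).eval z) := by
      intro ε; split <;> ring
    rw [Finset.sum_congr rfl fun ε _ => hsplit ε, Finset.sum_sub_distrib, sum_cheb,
      mul_sub]
    field_simp
    ring
  rw [key, abs_neg, abs_mul, abs_of_pos (by positivity : (0:ℝ) < 1 / 2 ^ m)]
  have hb : |∑ ε : Fin m → Bool,
      (if (|signSum m ε| : ℝ) ≤ t then (0:ℝ) else
        (Polynomial.Chebyshev.T ℝ (signSum m ε)).eval z)|
      ≤ 2 ^ m * (2 * Real.exp (-t ^ 2 / (2 * m))) := by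
    calc _ ≤ ∑ ε : Fin m → Bool, |(if (|signSum m ε| : ℝ) ≤ t then (0:ℝ) else
            (Polynomial.Chebyshev.T ℝ (signSum m ε)).eval z)| :=
          Finset.abs_sum_le_sum_abs _ _
      _ ≤ ∑ ε : Fin m → Bool, (if (|signSum m ε| : ℝ) ≤ t then (0:ℝ) else 1) := by
          apply Finset.sum_le_sum
          intro ε _
          split
          · simp
          · exact cheb_bound _ _ hz
      _ ≤ _ := tail_bound m hm t ht
  calc (1 / 2 ^ m : ℝ) * _ ≤ (1 / 2 ^ m : ℝ) * (2 ^ m * (2 * Real.exp (-t ^ 2 / (2 * m)))) :=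
        mul_le_mul_of_nonneg_left hb (by positivity)
    _ = 2 * Real.exp (-t ^ 2 / (2 * m)) := by field_simp
end
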